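/- Let $X = \{x \in C[0,1] : x(0) = x(1)\}$, let $\alpha \in (0,1)$ be irrational, and let $l \in X$ satisfy $l(1/2) = 0$ and $l(t) > 0$ for $t \neq 1/2$. Then the weighted composition operator $B$ on $X$ defined by $(Bx)(t) = l(t)\, x(t \dotplus \alpha)$ (addition mod 1) is band irreducible: there is no band $\mathfrak{B}$ in $X$ with $\{0\} \neq \mathfrak{B} \neq X$ and $B\mathfrak{B} \subseteq \mathfrak{B}$. -/

import Mathlib

/-!
Let `S` be the union of the open supports of the members of a nonzero invariant band `𝔅`.
Since `(Bv)(t - α) = l(t - α) v(t)` with `l > 0` off `1/2`, the rotation `t ↦ t - α` maps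
`S \ {1/2 + α}` into `S`; removing one point does not change the closure of an open subset of
the circle, so the closed set `closure S` is invariant under the rotation. It is nonempty, hence
contains a forward orbit of the irrational rotation, which is dense: `S` is dense. A function
disjoint from every member of `𝔅` vanishes on `S`, hence everywhere, so `𝔅ᵈ = 0` and
`𝔅 = 𝔅ᵈᵈ` is everything.
-/

open Set Function

instance AddCircle.nontrivial {p : ℝ} [hp : Fact (0 < p)] : Nontrivial (AddCircle p) := by
  have : Nontrivial (Ico 0 (0 + p)) := by
    refine ⟨⟨⟨0, by simp [hp.out]⟩, ⟨p / 2, by constructor <;> linarith [hp.out]⟩, ?_⟩⟩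
    simpa [Subtype.ext_iff] using (half_pos hp.out).ne
  exact (AddCircle.equivIco p 0).nontrivial

theorem mapsTo_closure_of_mapsTo_sdiff_singleton {X : Type*} [TopologicalSpace X] [T1Space X]
    {f : X → X} {s : Set X} {q : X} [Filter.NeBot (nhdsWithin q {q}ᶜ)] (hf : Continuous f)
    (hs : IsOpen s) (hfs : MapsTo f (s \ {q}) s) : MapsTo f (closure s) (closure s) := by
  have hclosure : closure s ⊆ closure (s \ {q}) :=
    closure_minimal ((dense_compl_singleton q).open_subset_closure_inter hs) isClosed_closure
  exact (hfs.closure hf).mono_left hclosure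

theorem IsClosed.eq_univ_of_mapsTo_add {G : Type*} [AddGroup G] [TopologicalSpace G]
    [ContinuousAdd G] {g : G} {C : Set G} (hC : IsClosed C) (hg : DenseRange (· • g : ℕ → G))
    (hne : C.Nonempty) (hCg : MapsTo (· + g) C C) : C = univ := by
  obtain ⟨t, ht⟩ := hne
  have horbit : ∀ n : ℕ, t + n • g ∈ C := by
    intro n
    induction n with
    | zero => simpa using ht
    | succ n ih => simpa [succ_nsmul, add_assoc] using hCg ih
  have hdense : DenseRange ((t + ·) ∘ (· • g : ℕ → G)) :=
    (Homeomorph.addLeft t).surjective.denseRange.comp hg (continuous_const.add continuous_id)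
  exact hC.closure_eq ▸ (hdense.mono (range_subset_iff.2 horbit)).closure_eq

theorem ContinuousMap.eq_zero_of_forall_abs_inf_abs_eq_zero {X : Type*} [TopologicalSpace X]
    {𝔅 : Set C(X, ℝ)} (hdense : Dense (⋃ v ∈ 𝔅, support v)) {w : C(X, ℝ)}
    (hw : ∀ v ∈ 𝔅, |w| ⊓ |v| = 0) : w = 0 := by
  have hvanish : EqOn w 0 (⋃ v ∈ 𝔅, support v) := by
    simp only [EqOn, mem_iUnion, mem_support]
    rintro t ⟨v, hv, hvt⟩
    have := DFunLike.congr_fun (hw v hv) t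
    simp only [ContinuousMap.inf_apply, ContinuousMap.abs_apply, ContinuousMap.zero_apply] at this
    by_contra hwt
    exact (lt_min (abs_pos.2 hwt) (abs_pos.2 hvt)).ne' this
  exact ContinuousMap.ext fun t ↦
    hvanish.closure w.continuous continuous_const (hdense.closure_eq ▸ mem_univ t)

theorem stmt4 (α : ℝ) (hirr : Irrational α)
    (l : C(AddCircle (1 : ℝ), ℝ))
    (hlpos : ∀ t : AddCircle (1 : ℝ), t ≠ ((1 / 2 : ℝ) : AddCircle (1 : ℝ)) → 0 < l t)
    (B : C(AddCircle (1 : ℝ), ℝ) →L[ℝ] C(AddCircle (1 : ℝ), ℝ))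
    (hB : ∀ (x : C(AddCircle (1 : ℝ), ℝ)) (t : AddCircle (1 : ℝ)),
      B x t = l t * x (t + ((α : ℝ) : AddCircle (1 : ℝ)))) :
    ¬ ∃ 𝔅 : Submodule ℝ C(AddCircle (1 : ℝ), ℝ),
        (∀ x ∈ 𝔅, ∀ y : C(AddCircle (1 : ℝ), ℝ), |y| ≤ |x| → y ∈ 𝔅) ∧
        (∀ y : C(AddCircle (1 : ℝ), ℝ),
          (∀ w : C(AddCircle (1 : ℝ), ℝ),
            (∀ v ∈ 𝔅, |w| ⊓ |v| = 0) → |y| ⊓ |w| = 0) → y ∈ 𝔅) ∧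
        𝔅 ≠ ⊥ ∧ 𝔅 ≠ ⊤ ∧ (∀ x ∈ 𝔅, B x ∈ 𝔅) := by
  rintro ⟨𝔅, -, hband, hbot, htop, hinv⟩
  set a : AddCircle (1 : ℝ) := ((α : ℝ) : AddCircle (1 : ℝ))
  set S := ⋃ v ∈ (𝔅 : Set C(AddCircle (1 : ℝ), ℝ)), support v
  have hS_open : IsOpen S := isOpen_biUnion fun v _ ↦ v.continuous.isOpen_support
  have hS_ne : S.Nonempty := by
    obtain ⟨v, hv, hv0⟩ := (Submodule.ne_bot_iff 𝔅).1 hbot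
    obtain ⟨t, ht⟩ := DFunLike.ne_iff.1 hv0
    exact ⟨t, mem_biUnion hv ht⟩
  have hS_rotate : MapsTo (· + -a) (S \ {((1 / 2 : ℝ) : AddCircle (1 : ℝ)) + a}) S := by
    rintro t ⟨ht, hne⟩
    obtain ⟨v, hv, hvt⟩ := mem_iUnion₂.1 ht
    refine mem_biUnion (hinv v hv) ?_
    rw [mem_support, hB, neg_add_cancel_right]
    exact mul_ne_zero (hlpos _ fun h ↦ hne (eq_add_of_add_neg_eq h)).ne' hvt
  have hrotation_dense : DenseRange (· • -a : ℕ → AddCircle (1 : ℝ)) := by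
    rw [← denseRange_zsmul_iff_nsmul, ← AddCircle.coe_neg, AddCircle.denseRange_zsmul_coe_iff]
    simpa using hirr.neg
  have hS_dense : Dense S := dense_iff_closure_eq.2 <|
    isClosed_closure.eq_univ_of_mapsTo_add hrotation_dense hS_ne.closure
    (mapsTo_closure_of_mapsTo_sdiff_singleton (continuous_add_const _) hS_open hS_rotate)
  refine htop (Submodule.eq_top_iff'.2 fun y ↦ hband y fun w hw ↦ ?_)
  simp [ContinuousMap.eq_zero_of_forall_abs_inf_abs_eq_zero hS_dense hw]
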